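/- arXiv:2509.24055 — 12 statements merged into one kernel-verified Lean document; each statement's English description precedes it below -/
import Mathlib

section
/- For every real number a, the equation t = cosh(t + a)·e^{-(t + a)} (equivalently t = (1 + e^{-2(t+a)})/2) has exactly one real solution t; moreover this solution satisfies t > 1/2. -/
open Function Real

/-- `t - φ t` changes sign on `[min 0 (φ 0), max 0 (φ 0)]`, because `φ t ≤ φ 0` for `t ≥ 0`
and `φ 0 ≤ φ t` for `t ≤ 0`. -/
theorem Antitone.existsUnique_isFixedPt {φ : ℝ → ℝ} (hφ : Antitone φ) (hc : Continuous φ) :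
    ∃! t, IsFixedPt φ t := by
  have hlo : min 0 (φ 0) - φ (min 0 (φ 0)) ≤ 0 := by
    have := hφ (min_le_left 0 (φ 0))
    linarith [min_le_right 0 (φ 0)]
  have hhi : 0 ≤ max 0 (φ 0) - φ (max 0 (φ 0)) := by
    have := hφ (le_max_left 0 (φ 0))
    linarith [le_max_right 0 (φ 0)]
  obtain ⟨t, -, ht⟩ := intermediate_value_Icc min_le_max (continuous_id.sub hc).continuousOn
    ⟨hlo, hhi⟩
  have ht' : φ t = t := (sub_eq_zero.mp ht).symm
  refine ⟨t, ht', fun s hs => le_antisymm ?_ ?_⟩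
  · exact not_lt.mp fun hts => by linarith [hφ hts.le, hs.eq]
  · exact not_lt.mp fun hst => by linarith [hφ hst.le, hs.eq]

theorem Real.cosh_mul_exp_neg (x : ℝ) : cosh x * exp (-x) = (1 + exp (-2 * x)) / 2 := by
  rw [cosh_eq, div_mul_eq_mul_div, add_mul, ← exp_add, ← exp_add]
  ring_nf
  rw [exp_zero]
  ring

/-- For every real number `a`, the equation `t = cosh(t + a) * exp (-(t + a))`
has exactly one real solution `t`; moreover this solution satisfies `t > 1/2`. -/
theorem stmt0 (a : ℝ) :
    (∃! t : ℝ, t = Real.cosh (t + a) * Real.exp (-(t + a))) ∧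
    (∀ t : ℝ, t = Real.cosh (t + a) * Real.exp (-(t + a)) → 1 / 2 < t) := by
  have hanti : Antitone fun t => cosh (t + a) * exp (-(t + a)) := by
    intro s t hst
    have := exp_le_exp.mpr (show -2 * (t + a) ≤ -2 * (s + a) by linarith)
    simp only [cosh_mul_exp_neg]
    linarith
  have hcont : Continuous fun t => cosh (t + a) * exp (-(t + a)) := by fun_prop
  refine ⟨by simpa only [IsFixedPt, eq_comm] using hanti.existsUnique_isFixedPt hcont, ?_⟩
  intro t ht
  rw [ht, cosh_mul_exp_neg]
  linarith [exp_pos (-2 * (t + a))]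
end

section
/- Let t₁ : ℝ → ℝ assign to each a the unique real solution t of t = cosh(t + a)·e^{-(t+a)}. Then t₁ is differentiable on ℝ, and for every a its derivative satisfies t₁'(a) = -1 + 1/(2·t₁(a)). -/
/-- `t₁ a` is the unique solution of `t = cosh (t + a) * exp (-(t + a))`.
Then `t₁` is differentiable and `t₁' a = -1 + 1 / (2 t₁ a)`. -/
theorem stmt4 (t₁ : ℝ → ℝ)
    (h : ∀ a t : ℝ, t = Real.cosh (t + a) * Real.exp (-(t + a)) ↔ t = t₁ a) :
    Differentiable ℝ t₁ ∧ ∀ a : ℝ, deriv t₁ a = -1 + 1 / (2 * t₁ a) := by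
  have key : ∀ x : ℝ, Real.cosh x * Real.exp (-x) = (1 + Real.exp (-(2*x)))/2 := by
    intro x
    rw [Real.cosh_eq, div_mul_eq_mul_div, add_mul, ← Real.exp_add, ← Real.exp_add]
    norm_num
    ring_nf
  have hEq : ∀ a : ℝ, t₁ a = (1 + Real.exp (-(2 * (t₁ a + a)))) / 2 := by
    intro a
    have h0 := (h a (t₁ a)).mpr rfl
    rw [key] at h0
    exact h0
  set g : ℝ → ℝ := fun x => x - (1 + Real.exp (-(2*x)))/2 with hgdef
  have hderiv : ∀ x : ℝ, HasDerivAt g (1 + Real.exp (-(2*x))) x := by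
    intro x
    have h1 : HasDerivAt (fun x : ℝ => -(2*x)) (-2) x := by
      have h1' := ((hasDerivAt_id x).const_mul 2).neg
      rw [mul_one] at h1'
      exact h1'
    have h2 : HasDerivAt (fun x : ℝ => Real.exp (-(2*x))) (Real.exp (-(2*x)) * (-2)) x :=
      h1.exp
    have h3 := (hasDerivAt_id x).sub ((h2.const_add 1).div_const 2)
    refine h3.congr_deriv ?_
    ring
  have hmono : StrictMono g := by
    apply strictMono_of_deriv_pos
    intro x
    rw [(hderiv x).deriv]
    positivity
  have hg_eq : ∀ a : ℝ, g (t₁ a + a) = a := by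
    intro a
    have := hEq a
    simp only [hgdef]
    linarith
  have hsurj : Function.Surjective g := fun a => ⟨t₁ a + a, hg_eq a⟩
  set u : ℝ → ℝ := fun a => t₁ a + a with hudef
  let e : ℝ ≃o ℝ := StrictMono.orderIsoOfSurjective g hmono hsurj
  have he : ∀ x, e x = g x := fun x => rfl
  have hue : ∀ a, u a = e.symm a := by
    intro a
    apply e.injective
    rw [e.apply_symm_apply, he, hg_eq]
  have hu_cont : Continuous u := by
    have : Continuous (e.symm : ℝ → ℝ) := OrderIso.continuous e.symm
    exact this.congr fun a => (hue a).symm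
  have hupos : ∀ a : ℝ, (0:ℝ) < 1 + Real.exp (-(2 * u a)) := by
    intro a; positivity
  have hu_deriv : ∀ a : ℝ, HasDerivAt u (1 + Real.exp (-(2 * u a)))⁻¹ a := by
    intro a
    apply HasDerivAt.of_local_left_inverse (hu_cont.continuousAt) (hderiv (u a))
      (ne_of_gt (hupos a))
    exact Filter.Eventually.of_forall hg_eq
  have ht_deriv : ∀ a : ℝ, HasDerivAt t₁ (-1 + 1 / (2 * t₁ a)) a := by
    intro a
    have h4 := (hu_deriv a).sub (hasDerivAt_id a)
    have h5 : (u - id) = t₁ := by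
      funext x; simp [hudef]
    rw [h5] at h4
    refine h4.congr_deriv ?_
    have h6 : 2 * t₁ a = 1 + Real.exp (-(2 * u a)) := by
      have := hEq a; rw [hudef]; linarith
    rw [h6]
    ring
  exact ⟨fun a => (ht_deriv a).differentiableAt, fun a => (ht_deriv a).deriv⟩
end

section
/- Let t₁ : ℝ → ℝ assign to each a the unique real solution t of t = cosh(t + a)·e^{-(t+a)}, set t₂(a) := t₁(-a), F(a) := 1/t₁(a) + 1/t₂(a), and Q(x) := x²(1 - x). Then F is differentiable on ℝ and for every a one has F'(a) = 4·(Q(1/(2·t₁(a))) - Q(1/(2·t₂(a)))). -/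
open Real Set

/-- With `t₁ a` the unique solution of `t = cosh (t + a) * exp (-(t + a))`,
`t₂ a = t₁ (-a)`, `F a = 1 / t₁ a + 1 / t₂ a` and `Q x = x² (1 - x)`,
the function `F` is differentiable with
`F' a = 4 (Q (1 / (2 t₁ a)) - Q (1 / (2 t₂ a)))`. -/
theorem stmt5 (t₁ : ℝ → ℝ)
    (h : ∀ a t : ℝ, t = Real.cosh (t + a) * Real.exp (-(t + a)) ↔ t = t₁ a)
    (F : ℝ → ℝ) (hF : ∀ a : ℝ, F a = 1 / t₁ a + 1 / t₁ (-a))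
    (Q : ℝ → ℝ) (hQ : ∀ x : ℝ, Q x = x ^ 2 * (1 - x)) :
    Differentiable ℝ F ∧
    ∀ a : ℝ, deriv F a = 4 * (Q (1 / (2 * t₁ a)) - Q (1 / (2 * t₁ (-a)))) := by
  have ht : ∀ a : ℝ, t₁ a = Real.cosh (t₁ a + a) * Real.exp (-(t₁ a + a)) :=
    fun a => (h a (t₁ a)).mpr rfl
  have cosh_form : ∀ x : ℝ, Real.cosh x * Real.exp (-x) = (1 + Real.exp (-(2*x))) / 2 := by
    intro x
    rw [Real.cosh_eq]
    rw [show -(2*x) = (-x) + (-x) by ring, Real.exp_add]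
    have := Real.exp_neg x
    field_simp [Real.exp_ne_zero]
    ring_nf
    rw [← Real.exp_add]
    ring_nf
    rw [Real.exp_zero]
  have key : ∀ a : ℝ, 2 * t₁ a - 1 = Real.exp (-(2 * (t₁ a + a))) := by
    intro a
    have := ht a
    rw [cosh_form] at this
    linarith
  have hgt : ∀ a : ℝ, 1/2 < t₁ a := by
    intro a
    have := key a
    have h2 := Real.exp_pos (-(2 * (t₁ a + a)))
    linarith
  set φ : ℝ → ℝ := fun t => -t - Real.log (2*t - 1) / 2 with hφ
  have hφt : ∀ a : ℝ, φ (t₁ a) = a := by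
    intro a
    have hk := key a
    have : Real.log (2 * t₁ a - 1) = -(2 * (t₁ a + a)) := by
      rw [hk, Real.log_exp]
    simp only [hφ, this]
    ring
  have hanti : StrictAntiOn φ (Ioi (1/2 : ℝ)) := by
    intro s hs t ht hst
    simp only [mem_Ioi] at hs ht
    have h1 : Real.log (2*s - 1) < Real.log (2*t - 1) :=
      Real.log_lt_log (by linarith) (by linarith)
    simp only [hφ]
    linarith
  have ht₁anti : StrictAnti t₁ := by
    intro x y hxy
    rcases lt_trichotomy (t₁ y) (t₁ x) with h1 | h1 | h1
    · exact h1
    · exfalso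
      have h2 := hφt x
      rw [← h1, hφt y] at h2
      linarith
    · exfalso
      have := hanti (mem_Ioi.mpr (hgt x)) (mem_Ioi.mpr (hgt y)) h1
      rw [hφt x, hφt y] at this; linarith
  have hrange : range (fun x => -t₁ x) = Iio (-(1/2) : ℝ) := by
    ext y
    simp only [mem_range, mem_Iio]
    constructor
    · rintro ⟨x, rfl⟩
      have := hgt x; linarith
    · intro hy
      have hy' : 1/2 < -y := by linarith
      refine ⟨φ (-y), ?_⟩
      -- t₁ (φ (-y)) = -y
      have h1 : φ (t₁ (φ (-y))) = φ (-y) := hφt (φ (-y))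
      have h2 : t₁ (φ (-y)) = -y := by
        by_contra hne
        rcases lt_or_gt_of_ne hne with h2 | h2
        · have := hanti (mem_Ioi.mpr (hgt (φ (-y)))) (mem_Ioi.mpr hy') h2
          rw [h1] at this; linarith
        · have := hanti (mem_Ioi.mpr hy') (mem_Ioi.mpr (hgt (φ (-y)))) h2
          rw [h1] at this; linarith
      rw [h2]; ring
  have hcont : Continuous t₁ := by
    have hmono : Monotone (fun x => -t₁ x) := fun x y hxy => by
      rcases eq_or_lt_of_le hxy with rfl | hlt
      · exact le_refl _
      · exact le_of_lt (neg_lt_neg (ht₁anti hlt))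
    have hc : Continuous (fun x => -t₁ x) := by
      apply continuous_iff_continuousAt.mpr
      intro a
      apply continuousAt_of_monotoneOn_of_image_mem_nhds
        (fun x _ y _ hxy => hmono hxy) Filter.univ_mem
      rw [image_univ, hrange]
      exact isOpen_Iio.mem_nhds (by have := hgt a; simp only [mem_Iio]; linarith)
    have : t₁ = fun x => -(-t₁ x) := by funext x; ring
    rw [this]
    exact hc.neg
  -- derivative of t₁ via inverse function
  have hd : ∀ a : ℝ, HasDerivAt t₁ ((1 - 2 * t₁ a) / (2 * t₁ a)) a := by
    intro a
    set t := t₁ a with htdef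
    have htpos : 1/2 < t := hgt a
    have hne : (2*t - 1 : ℝ) ≠ 0 := by linarith
    have h1 : HasDerivAt (fun s : ℝ => 2*s - 1) 2 t := by
      simpa using ((hasDerivAt_id t).const_mul 2).sub_const 1
    have h2 : HasDerivAt (fun s : ℝ => Real.log (2*s - 1)) (2 / (2*t - 1)) t :=
      h1.log hne
    have h3 : HasDerivAt φ (-1 - (2 / (2*t - 1)) / 2) t := by
      exact (hasDerivAt_id t).neg.sub (h2.div_const 2)
    have hf'ne : (-1 - (2 / (2*t - 1)) / 2 : ℝ) ≠ 0 := by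
      have : (0:ℝ) < 2 / (2*t - 1) := div_pos two_pos (by linarith)
      intro hc; nlinarith
    have h4 : HasDerivAt t₁ (-1 - (2 / (2*t - 1)) / 2)⁻¹ a :=
      HasDerivAt.of_local_left_inverse hcont.continuousAt h3 hf'ne
        (Filter.Eventually.of_forall hφt)
    convert h4 using 1
    have htne : (t : ℝ) ≠ 0 := by linarith
    have h5 : (-1 - 2 / (2*t - 1) / 2 : ℝ) = -(2*t) / (2*t - 1) := by
      field_simp
      ring
    rw [h5, inv_div]
    rw [div_eq_div_iff (by linarith) (by intro hc; nlinarith)]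
    ring
  -- F has derivative
  have hnz : ∀ a : ℝ, t₁ a ≠ 0 := fun a => by have := hgt a; linarith
  have hFeq : F = fun a => (t₁ a)⁻¹ + (t₁ (-a))⁻¹ := by
    funext a; rw [hF]; simp [one_div]
  have hFd : ∀ a : ℝ, HasDerivAt F
      (-((1 - 2 * t₁ a) / (2 * t₁ a)) / (t₁ a)^2
        + -((1 - 2 * t₁ (-a)) / (2 * t₁ (-a)) * (-1)) / (t₁ (-a))^2) a := by
    intro a
    rw [hFeq]
    have h1 : HasDerivAt (fun x => (t₁ x)⁻¹) (-((1 - 2 * t₁ a) / (2 * t₁ a)) / (t₁ a)^2) a :=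
      (hd a).inv (hnz a)
    have h2 : HasDerivAt (fun x : ℝ => t₁ (-x)) ((1 - 2 * t₁ (-a)) / (2 * t₁ (-a)) * (-1)) a :=
      (hd (-a)).comp a (hasDerivAt_neg a)
    have h3 : HasDerivAt (fun x => (t₁ (-x))⁻¹)
        (-((1 - 2 * t₁ (-a)) / (2 * t₁ (-a)) * (-1)) / (t₁ (-a))^2) a :=
      h2.inv (hnz (-a))
    exact h1.add h3
  constructor
  · intro a
    exact (hFd a).differentiableAt
  · intro a
    rw [(hFd a).deriv, hQ, hQ]
    have h1 := hgt a
    have h2 := hgt (-a)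
    have n1 : t₁ a ≠ 0 := hnz a
    have n2 : t₁ (-a) ≠ 0 := hnz (-a)
    field_simp
    ring
end

section
/- Let t₁ : ℝ → ℝ assign to each a the unique real solution t of t = cosh(t + a)·e^{-(t+a)}, and set F(a) := 1/t₁(a) + 1/t₁(-a). Then F attains its maximum over ℝ exactly at a = 0; that is, F(a) ≤ 2/t₁(0) for all real a, with equality if and only if a = 0. -/
open Real Set


private lemma cosh_mul_exp (s : ℝ) :
    Real.cosh s * Real.exp (-s) = (1 + Real.exp (-(2 * s))) / 2 := by
  rw [Real.cosh_eq, div_mul_eq_mul_div, add_mul, ← Real.exp_add, ← Real.exp_add,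
    show -s + -s = -(2*s) from by ring]
  norm_num

private lemma m_mono {s t : ℝ} (hs : 0 < s) (hst : s < t) (ht : t ≤ 1/2) :
    s * (1+t)^3 < t * (1+s)^3 := by
  have h3 : 0 < t - s := by linarith
  have h1 : s*t < 1/4 := by nlinarith
  have h2 : s + t < 1 := by nlinarith
  have h4 : 0 < 1 - 3*(s*t) - s*t*(s+t) := by nlinarith [mul_pos hs (hs.trans hst)]
  nlinarith [mul_pos h3 h4]

private lemma m_anti {s t : ℝ} (hs : 1/2 ≤ s) (hst : s < t) (ht : t ≤ 1) :
    t * (1+s)^3 < s * (1+t)^3 := by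
  have h3 : 0 < t - s := by linarith
  have h1 : 1/4 < s*t := by nlinarith
  have h2 : 1 < s + t := by linarith
  have h4 : 0 < 3*(s*t) + s*t*(s+t) - 1 := by
    nlinarith [mul_pos (show (0:ℝ) < s*t by linarith) (show (0:ℝ) < s+t-1 by linarith)]
  nlinarith [mul_pos h3 h4]

private lemma w_lt {w : ℝ} (hw0 : 0 < w) (hlog : Real.log w + w = -1) : w < (7:ℝ)/25 := by
  by_contra hle
  push_neg at hle
  have hw1 : w = Real.exp (-1 - w) := by
    rw [show -1 - w = Real.log w from by linarith, Real.exp_log hw0]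
  have e2 : (1.3192:ℝ) ≤ Real.exp 0.28 := by
    have := Real.sum_le_exp_of_nonneg (show (0:ℝ) ≤ 0.28 by norm_num) 3
    simp [Finset.sum_range_succ] at this
    norm_num at this ⊢
    linarith
  have e1 : (2.7182818:ℝ) < Real.exp 1 := by
    have := Real.exp_one_gt_d9
    norm_num at this ⊢
    linarith
  have e3 : (3.58:ℝ) < Real.exp 1.28 := by
    calc (3.58:ℝ) < 2.7182818 * 1.3192 := by norm_num
      _ ≤ Real.exp 1 * Real.exp 0.28 := by
          apply mul_le_mul e1.le e2 (by norm_num) (Real.exp_pos 1).le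
      _ = Real.exp 1.28 := by rw [← Real.exp_add]; norm_num
  have h5 : Real.exp (-1 - w) ≤ Real.exp (-1.28) := by
    apply Real.exp_le_exp.mpr; norm_num; linarith
  have h6 : Real.exp (-1.28) < 7/25 := by
    rw [Real.exp_neg]
    rw [inv_lt_comm₀ (Real.exp_pos _) (by norm_num)]
    calc ((7:ℝ)/25)⁻¹ < 3.58 := by norm_num
      _ < Real.exp 1.28 := e3
  linarith [hw1 ▸ (h5.trans_lt h6)]

private lemma phi_deriv (w : ℝ) {t : ℝ} (ht : 0 < t) :
    HasDerivAt (fun s => 1/(1+w) - w/(1+w)^3 * (Real.log s + s + 1) - 1/(1+s))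
      (1/(1+t)^2 - w/(1+w)^3 * (1/t + 1)) t := by
  have ht0 : t ≠ 0 := ne_of_gt ht
  have h1t : (1:ℝ) + t ≠ 0 := by positivity
  have h1 : HasDerivAt (fun s : ℝ => Real.log s + s + 1) (t⁻¹ + 1) t :=
    ((Real.hasDerivAt_log ht0).add (hasDerivAt_id t)).add_const 1
  have h2 : HasDerivAt (fun s : ℝ => 1/(1 + s)) (-(1 / (1+t)^2)) t := by
    have h := ((hasDerivAt_id t).const_add 1).inv h1t
    simp only [one_div]
    refine h.congr_deriv ?_
    simp [id, neg_div]
  have h3 := ((h1.const_mul (w/(1+w)^3)).const_sub (1/(1+w))).sub h2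
  refine h3.congr_deriv ?_
  simp only [one_div]
  ring

private lemma dpos {w t : ℝ} (hw0 : 0 < w) (ht : 0 < t)
    (cross : w*(1+t)^3 < t*(1+w)^3) : 0 < 1/(1+t)^2 - w/(1+w)^3 * (1/t + 1) := by
  have h1w : (0:ℝ) < 1+w := by linarith
  have h1t : (0:ℝ) < 1+t := by linarith
  have e1 : w/(1+w)^3 * (1/t+1) = (w*(1+t))/(t*(1+w)^3) := by field_simp
  rw [e1, sub_pos, div_lt_div_iff₀ (by positivity) (by positivity)]
  nlinarith [cross]

private lemma dneg {w t : ℝ} (hw0 : 0 < w) (ht : 0 < t)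
    (cross : t*(1+w)^3 < w*(1+t)^3) : 1/(1+t)^2 - w/(1+w)^3 * (1/t + 1) < 0 := by
  have h1w : (0:ℝ) < 1+w := by linarith
  have h1t : (0:ℝ) < 1+t := by linarith
  have e1 : w/(1+w)^3 * (1/t+1) = (w*(1+t))/(t*(1+w)^3) := by field_simp
  rw [e1, sub_neg, div_lt_div_iff₀ (by positivity) (by positivity)]
  nlinarith [cross]

private lemma phi_pos {w x : ℝ} (hw0 : 0 < w) (hw : w < 7/25)
    (hlog : Real.log w + w = -1) (hx0 : 0 < x) (hx1 : x ≤ 1) (hxw : x ≠ w) :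
    1/(1+x) + w/(1+w)^3 * (Real.log x + x + 1) < 1/(1+w) := by
  set φ : ℝ → ℝ := fun s => 1/(1+w) - w/(1+w)^3 * (Real.log s + s + 1) - 1/(1+s) with hφ
  have hφw : φ w = 0 := by
    simp only [hφ]
    rw [show Real.log w + w + 1 = 0 from by linarith]
    ring
  have hφ1 : 0 < φ 1 := by
    simp only [hφ, Real.log_one]
    have h1w : (0:ℝ) < 1+w := by linarith
    have e : 1/(1+w) - w/(1+w)^3*(0+1+1) - 1/(1+1) = (1-3*w-w^2-w^3)/(2*(1+w)^3) := by
      field_simp; ring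
    rw [e]
    apply div_pos ?_ (by positivity)
    nlinarith
  have hcont : ∀ a b : ℝ, 0 < a → ContinuousOn φ (Icc a b) := fun a b ha s hs =>
    ((phi_deriv w (lt_of_lt_of_le ha hs.1)).differentiableAt).continuousAt.continuousWithinAt
  suffices hs : 0 < φ x by
    simp only [hφ] at hs; linarith
  rcases lt_trichotomy x w with hlt | heq | hgt
  · have anti : StrictAntiOn φ (Icc x w) := by
      apply strictAntiOn_of_deriv_neg (convex_Icc x w) (hcont x w hx0)
      intro t ht
      rw [interior_Icc] at ht
      have ht0 : 0 < t := hx0.trans ht.1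
      rw [(phi_deriv w ht0).deriv]
      exact dneg hw0 ht0 (m_mono ht0 ht.2 (by linarith))
    have h5 := anti (left_mem_Icc.mpr hlt.le) (right_mem_Icc.mpr hlt.le) hlt
    rw [hφw] at h5; exact h5
  · exact absurd heq hxw
  · by_cases hx2 : x ≤ 1/2
    · have mono : StrictMonoOn φ (Icc w x) := by
        apply strictMonoOn_of_deriv_pos (convex_Icc w x) (hcont w x hw0)
        intro t ht
        rw [interior_Icc] at ht
        have ht0 : 0 < t := hw0.trans ht.1
        rw [(phi_deriv w ht0).deriv]
        exact dpos hw0 ht0 (m_mono hw0 ht.1 ((ht.2.trans_le hx2).le))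
      have h5 := mono (left_mem_Icc.mpr hgt.le) (right_mem_Icc.mpr hgt.le) hgt
      rw [hφw] at h5; exact h5
    · push_neg at hx2
      by_cases hc : w*(1+x)^3 ≤ x*(1+w)^3
      · have mono : StrictMonoOn φ (Icc w x) := by
          apply strictMonoOn_of_deriv_pos (convex_Icc w x) (hcont w x hw0)
          intro t ht
          rw [interior_Icc] at ht
          have ht0 : 0 < t := hw0.trans ht.1
          rw [(phi_deriv w ht0).deriv]
          apply dpos hw0 ht0
          by_cases ht2 : t ≤ 1/2
          · exact m_mono hw0 ht.1 ht2
          · push_neg at ht2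
            have hma : x*(1+t)^3 < t*(1+x)^3 := m_anti ht2.le ht.2 hx1
            nlinarith [mul_lt_mul_of_pos_right hma (show (0:ℝ) < (1+w)^3 by positivity),
                       mul_le_mul_of_nonneg_right hc (show (0:ℝ) ≤ (1+t)^3 by positivity),
                       pow_pos (show (0:ℝ) < 1+x by linarith) 3]
        have h5 := mono (left_mem_Icc.mpr hgt.le) (right_mem_Icc.mpr hgt.le) hgt
        rw [hφw] at h5; exact h5
      · push_neg at hc
        rcases eq_or_lt_of_le hx1 with h1 | h1
        · rw [h1]; exact hφ1
        · have anti : StrictAntiOn φ (Icc x 1) := by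
            apply strictAntiOn_of_deriv_neg (convex_Icc x 1) (hcont x 1 hx0)
            intro t ht
            rw [interior_Icc] at ht
            have ht0 : 0 < t := hx0.trans ht.1
            rw [(phi_deriv w ht0).deriv]
            apply dneg hw0 ht0
            have hma : t*(1+x)^3 < x*(1+t)^3 := m_anti hx2.le ht.1 ht.2.le
            nlinarith [mul_lt_mul_of_pos_right hma (show (0:ℝ) < (1+w)^3 by positivity),
                       mul_lt_mul_of_pos_right hc (show (0:ℝ) < (1+t)^3 by positivity),
                       pow_pos (show (0:ℝ) < 1+x by linarith) 3]
          have h5 := anti (left_mem_Icc.mpr h1.le) (right_mem_Icc.mpr h1.le) h1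
          linarith

private lemma tang {w x : ℝ} (hw0 : 0 < w) (hw : w < 7/25) (hlog : Real.log w + w = -1)
    (hx0 : 0 < x) (hx1 : x ≤ 1) :
    1/(1+x) + w/(1+w)^3 * (Real.log x + x + 1) ≤ 1/(1+w) := by
  by_cases hxw : x = w
  · subst hxw
    rw [show Real.log x + x + 1 = 0 from by linarith]
    simp
  · exact (phi_pos hw0 hw hlog hx0 hx1 hxw).le

private lemma key_half {w x y : ℝ} (hw0 : 0 < w) (hw : w < 7/25)
    (hlogw : Real.log w + w = -1) (hx0 : 0 < x) (hy0 : 0 < y) (hxy : x ≤ y)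
    (hsum : (Real.log x + x) + (Real.log y + y) = -2) :
    1/(1+x) + 1/(1+y) ≤ 2/(1+w) ∧ (1/(1+x) + 1/(1+y) = 2/(1+w) → x = w ∧ y = w) := by
  have hxw : x ≤ w := by
    by_contra hh
    push_neg at hh
    have h1 : Real.log w < Real.log x := Real.log_lt_log hw0 hh
    have h2 : Real.log x ≤ Real.log y := Real.log_le_log hx0 hxy
    linarith
  have hx1 : x ≤ 1 := by linarith
  by_cases hy1 : y ≤ 1
  · have tx := tang hw0 hw hlogw hx0 hx1
    have ty := tang hw0 hw hlogw hy0 hy1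
    have hz : w/(1+w)^3 * (Real.log x + x + 1) + w/(1+w)^3 * (Real.log y + y + 1) = 0 := by
      rw [← mul_add, show (Real.log x + x + 1) + (Real.log y + y + 1) = 0 from by linarith,
        mul_zero]
    have h2w : 2/(1+w) = 1/(1+w) + 1/(1+w) := by ring
    refine ⟨by linarith, fun heq => ?_⟩
    have hxw' : x = w := by
      by_contra hxne
      have tx' := phi_pos hw0 hw hlogw hx0 hx1 hxne
      linarith
    have hly : Real.log y + y = -1 := by
      rw [hxw'] at hsum; linarith
    have hyw : y = w := by
      rcases lt_trichotomy y w with hh | hh | hh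
      · have := Real.log_lt_log hy0 hh; linarith
      · exact hh
      · have := Real.log_lt_log hw0 hh; linarith
    exact ⟨hxw', hyw⟩
  · push_neg at hy1
    have b1 : 1/(1+x) < 1 := by rw [div_lt_one (by linarith)]; linarith
    have b2 : 1/(1+y) < 1/2 := by
      rw [div_lt_div_iff₀ (by linarith) (by norm_num)]; linarith
    have hgt : 3/2 < 2/(1+w) := by
      rw [div_lt_div_iff₀ (by norm_num) (by linarith)]; nlinarith
    exact ⟨by linarith, fun heq => absurd heq (by linarith)⟩

private lemma key {w x y : ℝ} (hw0 : 0 < w) (hw : w < 7/25)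
    (hlogw : Real.log w + w = -1) (hx0 : 0 < x) (hy0 : 0 < y)
    (hsum : (Real.log x + x) + (Real.log y + y) = -2) :
    1/(1+x) + 1/(1+y) ≤ 2/(1+w) ∧ (1/(1+x) + 1/(1+y) = 2/(1+w) → x = w) := by
  rcases le_total x y with hxy | hxy
  · have := key_half hw0 hw hlogw hx0 hy0 hxy hsum
    exact ⟨this.1, fun he => (this.2 he).1⟩
  · have := key_half hw0 hw hlogw hy0 hx0 hxy (by linarith)
    exact ⟨by linarith [this.1], fun he => (this.2 (by linarith)).2⟩

/-- With `t₁ a` the unique solution of `t = cosh (t + a) * exp (-(t + a))` and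
`F a = 1 / t₁ a + 1 / t₁ (-a)`, the function `F` attains its maximum exactly at
`a = 0`: `F a ≤ 2 / t₁ 0` with equality iff `a = 0`. -/
theorem stmt6 (t₁ : ℝ → ℝ)
    (h : ∀ a t : ℝ, t = Real.cosh (t + a) * Real.exp (-(t + a)) ↔ t = t₁ a) :
    ∀ a : ℝ, (1 / t₁ a + 1 / t₁ (-a)) ≤ 2 / t₁ 0 ∧
      ((1 / t₁ a + 1 / t₁ (-a)) = 2 / t₁ 0 ↔ a = 0) := by
  have ht : ∀ a, t₁ a = (1 + Real.exp (-(2 * (t₁ a + a)))) / 2 := by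
    intro a
    have h1 : t₁ a = Real.cosh (t₁ a + a) * Real.exp (-(t₁ a + a)) := (h a (t₁ a)).mpr rfl
    rw [cosh_mul_exp] at h1
    exact h1
  -- basic data for each b : ℝ
  have hlog : ∀ b, Real.log (Real.exp (-(2 * (t₁ b + b)))) + Real.exp (-(2 * (t₁ b + b)))
      = -1 - 2*b := by
    intro b
    rw [Real.log_exp]
    have := ht b
    have hx' : Real.exp (-(2 * (t₁ b + b))) = 2 * t₁ b - 1 := by linarith
    rw [hx']
    ring
  have hinv : ∀ b, 1 / t₁ b = 2 / (1 + Real.exp (-(2 * (t₁ b + b)))) := by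
    intro b
    conv_lhs => rw [ht b]
    rw [one_div_div]
  intro a
  set x := Real.exp (-(2 * (t₁ a + a))) with hxd
  set y := Real.exp (-(2 * (t₁ (-a) + -a))) with hyd
  set w := Real.exp (-(2 * (t₁ 0 + 0))) with hwd
  have hx0 : 0 < x := Real.exp_pos _
  have hy0 : 0 < y := Real.exp_pos _
  have hw0 : 0 < w := Real.exp_pos _
  have hlx : Real.log x + x = -1 - 2*a := hlog a
  have hly : Real.log y + y = -1 + 2*a := by
    have := hlog (-a); rw [← hyd] at this; linarith
  have hlw : Real.log w + w = -1 := by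
    have := hlog 0; rw [← hwd] at this; linarith
  have hK := key hw0 (w_lt hw0 hlw) hlw hx0 hy0 (by linarith)
  have e1 : 1 / t₁ a = 2 / (1+x) := hinv a
  have e2 : 1 / t₁ (-a) = 2 / (1+y) := hinv (-a)
  have e3 : 2 / t₁ 0 = 4 / (1+w) := by
    rw [show (4:ℝ)/(1+w) = 2 * (2/(1+w)) from by ring, ← hinv 0]
    ring
  have hsum2 : 2/(1+x) = 2*(1/(1+x)) := by ring
  have hsum3 : 2/(1+y) = 2*(1/(1+y)) := by ring
  have hsum4 : 4/(1+w) = 2*(2/(1+w)) := by ring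
  constructor
  · rw [e1, e2, e3, hsum2, hsum3]
    have := hK.1
    linarith
  · constructor
    · intro heq
      rw [e1, e2, e3, hsum2, hsum3] at heq
      have hxw : x = w := hK.2 (by linarith)
      have : Real.log x + x = -1 := by rw [hxw]; exact hlw
      linarith
    · intro ha
      subst ha
      rw [neg_zero]
      have h0 : t₁ 0 ≠ 0 := by
        have : 0 < t₁ 0 := by rw [ht 0]; positivity
        exact ne_of_gt this
      field_simp
      ring
end

section
/- Let t₀ be the unique real solution of t = cosh(t)·e^{-t} and set x₀ := 1/(2·t₀). Then 2 + (1 - x₀) + √((1 - x₀)(1 + 3x₀)) < 2/t₀. -/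
/-!
The defining equation of `t₀` is `2t = 1 + e^{-2t}`. Since `e^{-1.29} < 0.29`, this forces
`t₀ < 0.645`, so `x₀ = 1/(2t₀) > 100/129` lies beyond the larger root `(4 + √2)/7` of
`7x² - 8x + 2`; that is exactly the condition for `(1 - x)(1 + 3x) < (5x - 3)²`, i.e. for
`√((1 - x)(1 + 3x)) < 5x - 3 = 4x - 2 - (1 - x)`, and `4x₀ = 2/t₀`.
-/

open Real

theorem exp_neg_two_mul_eq_of_eq_cosh_mul_exp_neg {t : ℝ} (h : t = cosh t * exp (-t)) :
    exp (-(2 * t)) = 2 * t - 1 := by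
  have hprod : exp t * exp (-t) = 1 := by rw [← exp_add, add_neg_cancel, exp_zero]
  have hsq : exp (-t) * exp (-t) = exp (-(2 * t)) := by rw [← exp_add]; ring_nf
  rw [cosh_eq] at h
  linarith

theorem lt_of_exp_neg_two_mul_eq {t : ℝ} (h : exp (-(2 * t)) = 2 * t - 1) : t < 0.645 := by
  have hbound : exp (-1.29) < 0.29 := by
    have he : (2.7 : ℝ) < exp 1 := by linarith [exp_one_gt_d9]
    have hlin : (1.29 : ℝ) ≤ exp 0.29 := by linarith [add_one_le_exp (0.29 : ℝ)]
    have hsplit : exp 1.29 = exp 1 * exp 0.29 := by rw [← exp_add]; norm_num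
    rw [exp_neg, inv_lt_comm₀ (exp_pos _) (by norm_num), hsplit]
    nlinarith
  by_contra! ht
  have : exp (-(2 * t)) ≤ exp (-1.29) := exp_le_exp.2 (by linarith)
  linarith

theorem add_sqrt_lt_four_mul {u : ℝ} (hu : (4 + √2) / 7 < u) :
    2 + (1 - u) + √((1 - u) * (1 + 3 * u)) < 4 * u := by
  have h2 : √2 ^ 2 = 2 := sq_sqrt (by norm_num)
  have hs : 0 < √2 := by positivity
  have hquad : 0 < 7 * u ^ 2 - 8 * u + 2 := by
    have hfactor : 7 * u ^ 2 - 8 * u + 2 = 7 * (u - (4 + √2) / 7) * (u - (4 - √2) / 7) := by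
      ring_nf; rw [h2]; ring
    have : 0 < u - (4 - √2) / 7 := by linarith
    rw [hfactor]
    positivity
  have hsqrt : √((1 - u) * (1 + 3 * u)) < 5 * u - 3 := by
    rw [sqrt_lt' (by nlinarith)]
    nlinarith
  linarith

/-- With `t₀` the unique real solution of `t = cosh t * exp (-t)` and
`x₀ = 1 / (2 t₀)`, one has `2 + (1 - x₀) + √((1 - x₀)(1 + 3 x₀)) < 2 / t₀`. -/
theorem stmt8 (t₀ : ℝ) (ht : t₀ = Real.cosh t₀ * Real.exp (-t₀)) :
    2 + (1 - 1 / (2 * t₀)) +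
      Real.sqrt ((1 - 1 / (2 * t₀)) * (1 + 3 * (1 / (2 * t₀)))) < 2 / t₀ := by
  have hexp := exp_neg_two_mul_eq_of_eq_cosh_mul_exp_neg ht
  have hlow : 1 / 2 < t₀ := by linarith [exp_pos (-(2 * t₀))]
  have hup := lt_of_exp_neg_two_mul_eq hexp
  have hx₀ : (4 + √2) / 7 < 1 / (2 * t₀) := by
    have : √2 < 1.42 := by rw [sqrt_lt' (by norm_num)]; norm_num
    rw [lt_div_iff₀ (by linarith)]
    nlinarith
  have hrhs : 2 / t₀ = 4 * (1 / (2 * t₀)) := by field_simp; ring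
  rw [hrhs]
  exact add_sqrt_lt_four_mul hx₀
end

section
/- Let t₁ : ℝ → ℝ assign to each a the unique real solution t of t = cosh(t + a)·e^{-(t+a)}, and define α(a) := t₁(-a)/t₁(a). Then α is strictly increasing on ℝ, α(a) → 0 as a → -∞, α(a) → +∞ as a → +∞, and hence for every α₀ > 0 there exists a unique a ∈ ℝ with α(a) = α₀. -/
open Real Filter Topology

private noncomputable def gAux : ℝ → ℝ := fun s => s - (1 + Real.exp (-(2 * s))) / 2

private lemma gAux_strictMono : StrictMono gAux := by
  intro s s' hss'
  have hexp : Real.exp (-(2 * s')) < Real.exp (-(2 * s)) :=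
    Real.exp_lt_exp.mpr (by linarith)
  unfold gAux; linarith

private lemma gAux_continuous : Continuous gAux := by
  unfold gAux; continuity

private lemma gAux_tendsto_atTop : Filter.Tendsto gAux Filter.atTop Filter.atTop := by
  apply Filter.tendsto_atTop_mono' _ (_ : ∀ᶠ s in Filter.atTop, s - 1 ≤ gAux s)
  · exact Filter.tendsto_atTop_add_const_right _ (-1) Filter.tendsto_id
  · filter_upwards [Filter.eventually_ge_atTop (0 : ℝ)] with s hs
    have : Real.exp (-(2 * s)) ≤ 1 := Real.exp_le_one_iff.mpr (by linarith)
    unfold gAux; linarith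

private lemma gAux_tendsto_atBot : Filter.Tendsto gAux Filter.atBot Filter.atBot := by
  apply Filter.tendsto_atBot_mono (fun s => ?_) Filter.tendsto_id
  have : 0 < Real.exp (-(2 * s)) := Real.exp_pos _
  show gAux s ≤ s
  unfold gAux; linarith

private lemma gAux_surjective : Function.Surjective gAux :=
  gAux_continuous.surjective gAux_tendsto_atTop gAux_tendsto_atBot

private noncomputable def gIso : ℝ ≃o ℝ :=
  StrictMono.orderIsoOfSurjective gAux gAux_strictMono gAux_surjective

private lemma gIso_apply (s : ℝ) : gIso s = gAux s := rfl

private noncomputable def φAux : ℝ → ℝ := fun s => (1 + Real.exp (-(2 * s))) / 2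

/-- With `t₁ a` the unique solution of `t = cosh (t + a) * exp (-(t + a))` and
`α a = t₁ (-a) / t₁ a`, the function `α` is strictly increasing, tends to `0`
at `-∞` and to `+∞` at `+∞`, and hence takes every positive value exactly once. -/
theorem stmt10 (t₁ : ℝ → ℝ)
    (h : ∀ a t : ℝ, t = Real.cosh (t + a) * Real.exp (-(t + a)) ↔ t = t₁ a) :
    StrictMono (fun a => t₁ (-a) / t₁ a) ∧
    Filter.Tendsto (fun a => t₁ (-a) / t₁ a) Filter.atBot (nhds 0) ∧
    Filter.Tendsto (fun a => t₁ (-a) / t₁ a) Filter.atTop Filter.atTop ∧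
    ∀ α₀ : ℝ, 0 < α₀ → ∃! a : ℝ, t₁ (-a) / t₁ a = α₀ := by
  -- key identity: t₁ (gAux s) = φAux s
  have key : ∀ s : ℝ, t₁ (gAux s) = φAux s := by
    intro s
    have harg : φAux s + gAux s = s := by unfold φAux gAux; ring
    have hcosh : φAux s = Real.cosh s * Real.exp (-s) := by
      rw [Real.cosh_eq]
      have h1 : Real.exp s * Real.exp (-s) = 1 := by
        rw [← Real.exp_add]; simp
      have h2 : Real.exp (-s) * Real.exp (-s) = Real.exp (-(2 * s)) := by
        rw [← Real.exp_add]; ring_nf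
      unfold φAux
      nlinarith [h1, h2]
    have := (h (gAux s) (φAux s)).mp (by rw [harg]; exact hcosh)
    exact this.symm
  -- representation: t₁ a = φAux (gIso.symm a)
  have rep : ∀ a : ℝ, t₁ a = φAux (gIso.symm a) := by
    intro a
    have h0 : gAux (gIso.symm a) = a := gIso.apply_symm_apply a
    calc t₁ a = t₁ (gAux (gIso.symm a)) := by rw [h0]
      _ = φAux (gIso.symm a) := key _
  have φpos : ∀ s : ℝ, (1:ℝ)/2 < φAux s := by
    intro s; have := Real.exp_pos (-(2 * s)); unfold φAux; linarith
  have t₁pos : ∀ a : ℝ, 0 < t₁ a := by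
    intro a; rw [rep a]; linarith [φpos (gIso.symm a)]
  have φanti : StrictAnti φAux := by
    intro s s' hss'
    have : Real.exp (-(2 * s')) < Real.exp (-(2 * s)) := Real.exp_lt_exp.mpr (by linarith)
    unfold φAux; linarith
  have t₁anti : StrictAnti t₁ := by
    intro a b hab
    rw [rep a, rep b]
    exact φanti (gIso.symm.strictMono hab)
  have φcont : Continuous φAux := by unfold φAux; continuity
  have symm_cont : Continuous (gIso.symm : ℝ → ℝ) := by
    have : Continuous (gIso.toHomeomorph.symm : ℝ → ℝ) := gIso.toHomeomorph.symm.continuous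
    exact this
  have t₁cont : Continuous t₁ := by
    have : Continuous (fun a => φAux (gIso.symm a)) := φcont.comp symm_cont
    exact this.congr fun a => (rep a).symm
  -- limits of t₁
  have φ_atTop : Filter.Tendsto φAux Filter.atTop (nhds (1/2)) := by
    have : Filter.Tendsto (fun s : ℝ => Real.exp (-(2 * s))) Filter.atTop (nhds 0) := by
      apply Real.tendsto_exp_atBot.comp
      have h2 : Filter.Tendsto (fun s : ℝ => 2 * s) Filter.atTop Filter.atTop :=
        Filter.Tendsto.const_mul_atTop (by norm_num) Filter.tendsto_id
      exact Filter.tendsto_neg_atTop_atBot.comp h2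
    have := ((tendsto_const_nhds (x := (1:ℝ))).add this).div_const 2
    unfold φAux; simpa using this
  have φ_atBot : Filter.Tendsto φAux Filter.atBot Filter.atTop := by
    have hexp : Filter.Tendsto (fun s : ℝ => Real.exp (-(2 * s))) Filter.atBot Filter.atTop := by
      apply Real.tendsto_exp_atTop.comp
      have h2 : Filter.Tendsto (fun s : ℝ => 2 * s) Filter.atBot Filter.atBot :=
        Filter.Tendsto.const_mul_atBot (by norm_num) Filter.tendsto_id
      exact (Filter.tendsto_neg_atBot_atTop).comp h2
    have := (Filter.tendsto_atTop_add_const_left _ (1:ℝ) hexp).atTop_div_const (by norm_num : (0:ℝ) < 2)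
    unfold φAux; simpa using this
  have symm_atTop : Filter.Tendsto (gIso.symm : ℝ → ℝ) Filter.atTop Filter.atTop :=
    gIso.symm.tendsto_atTop
  have symm_atBot : Filter.Tendsto (gIso.symm : ℝ → ℝ) Filter.atBot Filter.atBot :=
    gIso.symm.tendsto_atBot
  have t₁_atTop : Filter.Tendsto t₁ Filter.atTop (nhds (1/2)) := by
    have := φ_atTop.comp symm_atTop
    exact this.congr fun a => (rep a).symm
  have t₁_atBot : Filter.Tendsto t₁ Filter.atBot Filter.atTop := by
    have := φ_atBot.comp symm_atBot
    exact this.congr fun a => (rep a).symm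
  -- now the four claims
  have hmono : StrictMono (fun a => t₁ (-a) / t₁ a) := by
    intro a b hab
    have h1 : t₁ (-a) < t₁ (-b) := t₁anti (by linarith)
    have h2 : t₁ b < t₁ a := t₁anti hab
    exact div_lt_div₀ h1 h2.le (t₁pos (-b)).le (t₁pos b)
  have hbot : Filter.Tendsto (fun a => t₁ (-a) / t₁ a) Filter.atBot (nhds 0) := by
    have hnum : Filter.Tendsto (fun a => t₁ (-a)) Filter.atBot (nhds (1/2)) :=
      t₁_atTop.comp Filter.tendsto_neg_atBot_atTop
    exact hnum.div_atTop t₁_atBot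
  have htop : Filter.Tendsto (fun a => t₁ (-a) / t₁ a) Filter.atTop Filter.atTop := by
    have hnum : Filter.Tendsto (fun a => t₁ (-a)) Filter.atTop Filter.atTop :=
      t₁_atBot.comp Filter.tendsto_neg_atTop_atBot
    have hden : Filter.Tendsto (fun a => (t₁ a)⁻¹) Filter.atTop (nhds 2) := by
      have := t₁_atTop.inv₀ (by norm_num)
      simpa using this
    have := hnum.atTop_mul_pos (by norm_num : (0:ℝ) < 2) hden
    exact this.congr fun a => (div_eq_mul_inv _ _).symm
  refine ⟨hmono, hbot, htop, ?_⟩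
  intro α₀ hα₀
  have hcont : Continuous (fun a => t₁ (-a) / t₁ a) :=
    (t₁cont.comp continuous_neg).div t₁cont fun a => (t₁pos a).ne'
  obtain ⟨a₁, ha₁⟩ : ∃ a₁, t₁ (-a₁) / t₁ a₁ < α₀ := by
    have := hbot.eventually (eventually_lt_nhds hα₀)
    exact this.exists
  obtain ⟨a₂, ha₂⟩ : ∃ a₂, α₀ < t₁ (-a₂) / t₁ a₂ := by
    have := htop.eventually_gt_atTop α₀
    exact this.exists
  have h12 : a₁ < a₂ := by
    by_contra hc
    push_neg at hc
    have : t₁ (-a₂) / t₁ a₂ ≤ t₁ (-a₁) / t₁ a₁ := hmono.monotone hc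
    linarith
  obtain ⟨a, -, ha⟩ := intermediate_value_Icc h12.le hcont.continuousOn
    ⟨ha₁.le, ha₂.le⟩
  exact ⟨a, ha, fun b hb => hmono.injective (hb.trans ha.symm)⟩
end

section
/- Let x, y, T > 0 be fixed real numbers. The function g : (0, ∞) → ℝ defined by g(s) = 4s/((x + y) + √((x + y)² - 8xy·sinh(sT)·e^{-sT})) is strictly increasing. -/
/-! Since `sinh u · e^{-u} = (1 - e^{-2u}) / 2` is increasing in `u`, the radicand, and with it
the positive denominator `(x + y) + √…`, is non-increasing in `s`, while the numerator `4s` is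
positive and strictly increasing. -/

open Real Set

theorem Real.sinh_mul_exp_neg (u : ℝ) : sinh u * exp (-u) = (1 - exp (-(2 * u))) / 2 := by
  have h : exp u * exp (-u) = 1 := by rw [← exp_add, add_neg_cancel, exp_zero]
  rw [sinh_eq, show -(2 * u) = -u + -u by ring, exp_add]
  linear_combination h / 2

theorem Real.monotone_sinh_mul_exp_neg : Monotone fun u => sinh u * exp (-u) := by
  intro a b hab
  simp only [sinh_mul_exp_neg]
  gcongr

theorem StrictMonoOn.div_of_antitoneOn {α β : Type*} [Preorder α] [Field β] [LinearOrder β]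
    [IsStrictOrderedRing β] {s : Set α} {f g : α → β} (hf : StrictMonoOn f s)
    (hg : AntitoneOn g s) (hf₀ : ∀ t ∈ s, 0 ≤ f t) (hg₀ : ∀ t ∈ s, 0 < g t) :
    StrictMonoOn (fun t => f t / g t) s := by
  intro a ha b hb hab
  calc f a / g a ≤ f a / g b := div_le_div_of_nonneg_left (hf₀ a ha) (hg₀ b hb) (hg ha hb hab.le)
    _ < f b / g b := div_lt_div_of_pos_right (hf ha hb hab) (hg₀ b hb)

/-- For fixed `x, y, T > 0` the function
`s ↦ 4s / ((x+y) + √((x+y)² - 8xy sinh(sT) e^{-sT}))` is strictly increasing on `(0, ∞)`. -/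
theorem stmt13 (x y T : ℝ) (hx : 0 < x) (hy : 0 < y) (hT : 0 < T) :
    StrictMonoOn
      (fun s : ℝ => 4 * s / ((x + y) +
        Real.sqrt ((x + y) ^ 2 - 8 * x * y * Real.sinh (s * T) * Real.exp (-(s * T)))))
      (Set.Ioi 0) := by
  refine StrictMonoOn.div_of_antitoneOn ((strictMono_mul_left_of_pos four_pos).strictMonoOn _)
    ?_ (fun s hs => by have := mem_Ioi.1 hs; positivity) (fun s _ => by positivity)
  intro a _ b _ hab
  have hsinh := monotone_sinh_mul_exp_neg (mul_le_mul_of_nonneg_right hab hT.le)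
  simp only [mul_assoc] at hsinh ⊢
  gcongr
end

section
/- Fix α > 0 and define H : (0, ∞) → ℝ by H(T) = 4T / ((1/α + 1)·(α + 1 + √((α + 1)² - 8α·sinh(T)·e^{-T}))). Then H is strictly increasing, H(T) → 0 as T → 0⁺, H(T) → +∞ as T → +∞, and consequently there exists a unique T(α) > 0 with H(T(α)) = 1. -/
/-- For fixed `α > 0`, the function
`H T = 4T / ((1/α + 1)(α + 1 + √((α+1)² - 8α sinh T e^{-T})))` is strictly increasing
on `(0, ∞)`, tends to `0` as `T → 0⁺` and to `+∞` as `T → +∞`; consequently there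
is a unique `T > 0` with `H T = 1`. -/
theorem stmt14 (α : ℝ) (hα : 0 < α) (H : ℝ → ℝ)
    (hH : ∀ T : ℝ, H T = 4 * T /
      ((1 / α + 1) * (α + 1 + Real.sqrt ((α + 1) ^ 2 - 8 * α * Real.sinh T * Real.exp (-T))))) :
    StrictMonoOn H (Set.Ioi 0) ∧
    Filter.Tendsto H (nhdsWithin 0 (Set.Ioi 0)) (nhds 0) ∧
    Filter.Tendsto H Filter.atTop Filter.atTop ∧
    ∃! T : ℝ, 0 < T ∧ H T = 1 := by
  set g : ℝ → ℝ := fun T => (α - 1) ^ 2 + 4 * α * Real.exp (-T) ^ 2 with hg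
  have hkey : ∀ T : ℝ, (α + 1) ^ 2 - 8 * α * Real.sinh T * Real.exp (-T) = g T := by
    intro T
    have he := (Real.exp_pos T).ne'
    simp only [hg, Real.sinh_eq, Real.exp_neg]
    field_simp
    ring
  have hgpos : ∀ T : ℝ, 0 < g T := by
    intro T
    have := Real.exp_pos (-T)
    positivity
  set D : ℝ → ℝ := fun T => (1 / α + 1) * (α + 1 + Real.sqrt (g T)) with hD
  have hH' : ∀ T, H T = 4 * T / D T := by intro T; rw [hH, hkey]
  have hDpos : ∀ T, 0 < D T := by
    intro T
    have h1 : 0 < 1 / α + 1 := by positivity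
    have h2 : 0 ≤ Real.sqrt (g T) := Real.sqrt_nonneg _
    have h3 : 0 < α + 1 + Real.sqrt (g T) := by linarith
    exact mul_pos h1 h3
  have hDanti : ∀ s t : ℝ, s < t → D t < D s := by
    intro s t hst
    have h1 : Real.exp (-t) < Real.exp (-s) := Real.exp_lt_exp.2 (by linarith)
    have h2 : g t < g s := by
      have hsq : Real.exp (-t) ^ 2 < Real.exp (-s) ^ 2 :=
        pow_lt_pow_left₀ h1 (Real.exp_pos _).le two_ne_zero
      simp only [hg]
      nlinarith [hsq]
    have h3 : Real.sqrt (g t) < Real.sqrt (g s) := Real.sqrt_lt_sqrt (hgpos t).le h2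
    have h4 : 0 < 1 / α + 1 := by positivity
    have := mul_lt_mul_of_pos_left
      (by linarith : α + 1 + Real.sqrt (g t) < α + 1 + Real.sqrt (g s)) h4
    simpa [hD] using this
  have hmono : StrictMonoOn H (Set.Ioi 0) := by
    intro s hs t ht hst
    have hs0 : (0 : ℝ) < s := hs
    rw [hH' s, hH' t]
    exact div_lt_div₀ (by linarith) (hDanti s t hst).le (by linarith) (hDpos t)
  have hHc : Continuous H := by
    have hfun : H = fun T => 4 * T / D T := funext hH'
    rw [hfun]
    have hDc : Continuous D := by
      apply continuous_const.mul
      exact continuous_const.add ((Real.continuous_sqrt).comp (by fun_prop))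
    exact (continuous_const.mul continuous_id).div hDc fun T => (hDpos T).ne'
  have h00 : H 0 = 0 := by rw [hH']; simp
  have h0t : Filter.Tendsto H (nhdsWithin 0 (Set.Ioi 0)) (nhds 0) := by
    have := (hHc.tendsto 0).mono_left
      (nhdsWithin_le_nhds : nhdsWithin (0:ℝ) (Set.Ioi 0) ≤ nhds 0)
    rwa [h00] at this
  set C : ℝ := (1 / α + 1) * (2 * (α + 1)) with hC
  have hCpos : 0 < C := by positivity
  have hDle : ∀ T : ℝ, 0 ≤ T → D T ≤ C := by
    intro T hT
    have h1 : Real.exp (-T) ≤ 1 := Real.exp_le_one_iff.mpr (by linarith)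
    have h1' : 0 < Real.exp (-T) := Real.exp_pos _
    have hsq : Real.exp (-T) ^ 2 ≤ 1 := by nlinarith
    have h2 : g T ≤ (α + 1) ^ 2 := by simp only [hg]; nlinarith
    have h3 : Real.sqrt (g T) ≤ α + 1 := by
      have := Real.sqrt_le_sqrt h2
      rwa [Real.sqrt_sq (by linarith : (0:ℝ) ≤ α + 1)] at this
    have h4 : (0:ℝ) < 1 / α + 1 := by positivity
    simp only [hD, hC]
    nlinarith
  have htop : Filter.Tendsto H Filter.atTop Filter.atTop := by
    have hbase : Filter.Tendsto (fun T : ℝ => 4 * T / C) Filter.atTop Filter.atTop := by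
      apply Filter.Tendsto.atTop_div_const hCpos
      exact Filter.Tendsto.const_mul_atTop (by norm_num) Filter.tendsto_id
    apply Filter.tendsto_atTop_mono' Filter.atTop _ hbase
    filter_upwards [Filter.eventually_ge_atTop (0 : ℝ)] with T hT
    rw [hH' T]
    exact div_le_div_of_nonneg_left (by linarith) (hDpos T) (hDle T hT)
  refine ⟨hmono, h0t, htop, ?_⟩
  have hsmall : ∀ᶠ T in nhdsWithin 0 (Set.Ioi 0), H T < 1 :=
    h0t.eventually (gt_mem_nhds one_pos)
  obtain ⟨a, haH, ha⟩ := (hsmall.and self_mem_nhdsWithin).exists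
  have hbig : ∀ᶠ T in Filter.atTop, 1 < H T ∧ a < T :=
    (htop.eventually_gt_atTop 1).and (Filter.eventually_gt_atTop a)
  obtain ⟨b, hbH, hab⟩ := hbig.exists
  have ha0 : (0 : ℝ) < a := ha
  have hivt := intermediate_value_Icc hab.le hHc.continuousOn
  have h1mem : (1 : ℝ) ∈ Set.Icc (H a) (H b) := ⟨haH.le, hbH.le⟩
  obtain ⟨T, hTmem, hT1⟩ := hivt h1mem
  have hT0 : 0 < T := lt_of_lt_of_le ha0 hTmem.1
  refine ⟨T, ⟨hT0, hT1⟩, ?_⟩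
  intro y hy
  exact hmono.injOn (Set.mem_Ioi.2 hy.1) (Set.mem_Ioi.2 hT0) (by rw [hy.2, hT1])
end

section
/- Let a ∈ ℝ and let t₁, t₂ > 0 satisfy t₁ = cosh(t₁ + a)·e^{-(t₁ + a)} and t₂ = cosh(t₂ - a)·e^{-(t₂ - a)}. Set T := t₁ + t₂, A := 1/t₁ + 1/t₂ and B := 1/(t₁·t₂). Then A² - 8B·sinh(T)·e^{-T} ≥ 0 and A + √(A² - 8B·sinh(T)·e^{-T}) = 4. -/
/-!
Writing `cosh x · e^{-x} = (1 + e^{-2x})/2`, the two defining equations say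
`e^{-2(t₁+a)} = 2t₁ - 1` and `e^{-2(t₂-a)} = 2t₂ - 1`; in particular `t₁, t₂ > 1/2`, and
multiplying them gives `e^{-2T} = (2t₁ - 1)(2t₂ - 1)`. Since `sinh T · e^{-T} = (1 - e^{-2T})/2`,
the discriminant becomes the perfect square `(4 - A)²`, and `A < 4` because each `1/tᵢ < 2`.
-/

namespace Real

lemma cosh_mul_exp_neg_s15 (x : ℝ) : cosh x * exp (-x) = (1 + exp (-(2 * x))) / 2 := by
  have h : exp x * exp (-x) = 1 := by rw [← exp_add, add_neg_cancel, exp_zero]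
  rw [cosh_eq, show -(2 * x) = -x + -x by ring, exp_add]
  linear_combination h / 2

lemma sinh_mul_exp_neg_s15 (x : ℝ) : sinh x * exp (-x) = (1 - exp (-(2 * x))) / 2 := by
  have h : exp x * exp (-x) = 1 := by rw [← exp_add, add_neg_cancel, exp_zero]
  rw [sinh_eq, show -(2 * x) = -x + -x by ring, exp_add]
  linear_combination h / 2

lemma exp_neg_two_mul_of_eq_cosh_mul_exp_neg {x t : ℝ} (h : t = cosh x * exp (-x)) :
    exp (-(2 * x)) = 2 * t - 1 := by
  rw [h, cosh_mul_exp_neg_s15]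
  ring

end Real

lemma inv_add_inv_lt_four {t₁ t₂ : ℝ} (h₁ : 1 / 2 < t₁) (h₂ : 1 / 2 < t₂) :
    1 / t₁ + 1 / t₂ < 4 := by
  have hlt : ∀ t : ℝ, 1 / 2 < t → 1 / t < 2 := fun t ht => by
    rw [div_lt_iff₀ (by linarith)]
    linarith
  linarith [hlt t₁ h₁, hlt t₂ h₂]

lemma discriminant_eq_sq {t₁ t₂ : ℝ} (h₁ : t₁ ≠ 0) (h₂ : t₂ ≠ 0) :
    (1 / t₁ + 1 / t₂) ^ 2 - 8 * (1 / (t₁ * t₂)) * ((1 - (2 * t₁ - 1) * (2 * t₂ - 1)) / 2) =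
      (4 - (1 / t₁ + 1 / t₂)) ^ 2 := by
  field_simp
  ring

theorem stmt15_general (a t₁ t₂ : ℝ)
    (h₁ : t₁ = Real.cosh (t₁ + a) * Real.exp (-(t₁ + a)))
    (h₂ : t₂ = Real.cosh (t₂ - a) * Real.exp (-(t₂ - a))) :
    0 ≤ (1 / t₁ + 1 / t₂) ^ 2 -
        8 * (1 / (t₁ * t₂)) * Real.sinh (t₁ + t₂) * Real.exp (-(t₁ + t₂)) ∧
    (1 / t₁ + 1 / t₂) +
      Real.sqrt ((1 / t₁ + 1 / t₂) ^ 2 -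
        8 * (1 / (t₁ * t₂)) * Real.sinh (t₁ + t₂) * Real.exp (-(t₁ + t₂))) = 4 := by
  have e₁ := Real.exp_neg_two_mul_of_eq_cosh_mul_exp_neg h₁
  have e₂ := Real.exp_neg_two_mul_of_eq_cosh_mul_exp_neg h₂
  have ht₁ : 1 / 2 < t₁ := by linarith [Real.exp_pos (-(2 * (t₁ + a)))]
  have ht₂ : 1 / 2 < t₂ := by linarith [Real.exp_pos (-(2 * (t₂ - a)))]
  have eT : Real.exp (-(2 * (t₁ + t₂))) = (2 * t₁ - 1) * (2 * t₂ - 1) := by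
    rw [← e₁, ← e₂, ← Real.exp_add]
    ring_nf
  have hD : (1 / t₁ + 1 / t₂) ^ 2 -
      8 * (1 / (t₁ * t₂)) * Real.sinh (t₁ + t₂) * Real.exp (-(t₁ + t₂)) =
        (4 - (1 / t₁ + 1 / t₂)) ^ 2 := by
    rw [mul_assoc, Real.sinh_mul_exp_neg_s15, eT, discriminant_eq_sq (by linarith) (by linarith)]
  have hA := inv_add_inv_lt_four ht₁ ht₂
  rw [hD, Real.sqrt_sq (by linarith)]
  exact ⟨sq_nonneg _, by ring⟩

/-- If `t₁, t₂ > 0` satisfy `t₁ = cosh(t₁ + a) e^{-(t₁+a)}` and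
`t₂ = cosh(t₂ - a) e^{-(t₂-a)}`, then with `T = t₁ + t₂`, `A = 1/t₁ + 1/t₂`,
`B = 1/(t₁ t₂)`, one has `A² - 8B sinh T e^{-T} ≥ 0` and
`A + √(A² - 8B sinh T e^{-T}) = 4`. -/
theorem stmt15 (a t₁ t₂ : ℝ) (ht₁ : 0 < t₁) (ht₂ : 0 < t₂)
    (h₁ : t₁ = Real.cosh (t₁ + a) * Real.exp (-(t₁ + a)))
    (h₂ : t₂ = Real.cosh (t₂ - a) * Real.exp (-(t₂ - a))) :
    0 ≤ (1 / t₁ + 1 / t₂) ^ 2 -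
        8 * (1 / (t₁ * t₂)) * Real.sinh (t₁ + t₂) * Real.exp (-(t₁ + t₂)) ∧
    (1 / t₁ + 1 / t₂) +
      Real.sqrt ((1 / t₁ + 1 / t₂) ^ 2 -
        8 * (1 / (t₁ * t₂)) * Real.sinh (t₁ + t₂) * Real.exp (-(t₁ + t₂))) = 4 :=
  stmt15_general a t₁ t₂ h₁ h₂
end

section
/- Let N ≥ 2 be an integer, τ > 0, and let b₁, …, b_N and k₁, …, k_{N-1} be real numbers satisfying: k₁ = -τ·b₁; k_i = k_{i-1} - τ·b_i for every i with 2 ≤ i ≤ N - 1; and k_{N-1} = τ·b_N. Suppose b₁ < 0, b_N > 0, and there exists an index s with 2 ≤ s ≤ N such that b_i ≤ 0 for all i < s and b_i ≥ 0 for all i ≥ s. Then k_i > 0 for every i = 1, …, N - 1. -/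
/-!
The slopes form a discrete antiderivative of `-τ b`: `k` increases while `b ≤ 0` and decreases
once `b ≥ 0`, so on `[1, N - 1]` it is unimodal and bounded below by its endpoint values
`k₁ = -τ b₁ > 0` and `k_{N-1} = τ b_N > 0`.
-/

open Set

theorem monotoneOn_Icc_of_le_succ {α : Type*} [Preorder α] {f : ℕ → α} {m n : ℕ}
    (hf : ∀ i, m ≤ i → i < n → f i ≤ f (i + 1)) : MonotoneOn f (Icc m n) :=
  monotoneOn_of_le_succ ordConnected_Icc fun i _ hi hi' ↦ by
    rw [Order.succ_eq_add_one] at hi' ⊢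
    exact hf i hi.1 (Nat.lt_of_succ_le hi'.2)

theorem antitoneOn_Icc_of_succ_le {α : Type*} [Preorder α] {f : ℕ → α} {m n : ℕ}
    (hf : ∀ i, m ≤ i → i < n → f (i + 1) ≤ f i) : AntitoneOn f (Icc m n) :=
  monotoneOn_Icc_of_le_succ (α := αᵒᵈ) hf

theorem lt_of_monotoneOn_of_antitoneOn {α : Type*} [Preorder α] {f : ℕ → α} {x : α}
    {a c d : ℕ} (hmono : MonotoneOn f (Icc a c)) (hanti : AntitoneOn f (Icc c d))
    (ha : x < f a) (hd : x < f d) : ∀ i ∈ Icc a d, x < f i := by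
  rintro i ⟨hai, hid⟩
  rcases le_total i c with hic | hci
  · exact ha.trans_le (hmono ⟨le_rfl, hai.trans hic⟩ ⟨hai, hic⟩ hai)
  · exact hd.trans_le (hanti ⟨hci, hid⟩ ⟨hci.trans hid, le_rfl⟩ hid)

theorem stmt16_general (N : ℕ) (τ : ℝ) (hτ : 0 < τ)
    (b k : ℕ → ℝ)
    (hk1 : k 1 = -τ * b 1)
    (hki : ∀ i : ℕ, 2 ≤ i → i ≤ N - 1 → k i = k (i - 1) - τ * b i)
    (hkN : k (N - 1) = τ * b N)
    (hb1 : b 1 < 0) (hbN : 0 < b N)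
    (hs : ∃ s : ℕ, 2 ≤ s ∧ s ≤ N ∧
      (∀ i : ℕ, 1 ≤ i → i < s → b i ≤ 0) ∧
      (∀ i : ℕ, s ≤ i → i ≤ N → 0 ≤ b i)) :
    ∀ i : ℕ, 1 ≤ i → i ≤ N - 1 → 0 < k i := by
  obtain ⟨s, hs2, hsN, hneg, hpos⟩ := hs
  have hstep : ∀ i, 1 ≤ i → i + 1 ≤ N - 1 → k (i + 1) = k i - τ * b (i + 1) := fun i hi hiN ↦ by
    simpa using hki (i + 1) (by omega) hiN
  have hmono : MonotoneOn k (Icc 1 (s - 1)) := monotoneOn_Icc_of_le_succ fun i hi his ↦ by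
    have := hneg (i + 1) (by omega) (by omega)
    rw [hstep i hi (by omega)]
    nlinarith
  have hanti : AntitoneOn k (Icc (s - 1) (N - 1)) := antitoneOn_Icc_of_succ_le fun i hi hiN ↦ by
    have := hpos (i + 1) (by omega) (by omega)
    rw [hstep i (by omega) (by omega)]
    nlinarith
  have hk1_pos : 0 < k 1 := by rw [hk1]; nlinarith
  have hkN_pos : 0 < k (N - 1) := by rw [hkN]; positivity
  exact fun i h1 hN ↦ lt_of_monotoneOn_of_antitoneOn hmono hanti hk1_pos hkN_pos i ⟨h1, hN⟩

/-- Discrete content of Proposition B.1: under the transmission relations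
`k₁ = -τ b₁`, `kᵢ = kᵢ₋₁ - τ bᵢ` (`2 ≤ i ≤ N-1`), `k_{N-1} = τ b_N`, with
`b₁ < 0 < b_N` and `b` nonpositive before some index `s` and nonnegative from
it on, all the slopes `kᵢ` (`1 ≤ i ≤ N-1`) are positive. -/
theorem stmt16 (N : ℕ) (hN : 2 ≤ N) (τ : ℝ) (hτ : 0 < τ)
    (b k : ℕ → ℝ)
    (hk1 : k 1 = -τ * b 1)
    (hki : ∀ i : ℕ, 2 ≤ i → i ≤ N - 1 → k i = k (i - 1) - τ * b i)
    (hkN : k (N - 1) = τ * b N)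
    (hb1 : b 1 < 0) (hbN : 0 < b N)
    (hs : ∃ s : ℕ, 2 ≤ s ∧ s ≤ N ∧
      (∀ i : ℕ, 1 ≤ i → i < s → b i ≤ 0) ∧
      (∀ i : ℕ, s ≤ i → i ≤ N → 0 ≤ b i)) :
    ∀ i : ℕ, 1 ≤ i → i ≤ N - 1 → 0 < k i :=
  stmt16_general N τ hτ b k hk1 hki hkN hb1 hbN hs
end

section
/- Let x, y, T > 0 and let n ≥ 1 be a natural number, and let τ be real. There exists a pair (a, a') ≠ (0, 0) of real numbers such that the function h(t) = a·cosh(nt) + a'·sinh(nt) satisfies both boundary conditions n·h(0) - h'(0) = τ·x·h(0) and n·h(T) + h'(T) = τ·y·h(T) if and only if τ²·xy·sinh(nT) - nτ·e^{nT}(x + y) + 2n²·e^{nT} = 0. -/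
lemma det_iff_aux (A B C D : ℝ) :
    (∃ a a' : ℝ, (a, a') ≠ (0, 0) ∧ A * a + B * a' = 0 ∧ C * a + D * a' = 0) ↔
      A * D - B * C = 0 := by
  constructor
  · rintro ⟨a, a', hne, h1, h2⟩
    have ha : (A * D - B * C) * a = 0 := by linear_combination D * h1 - B * h2
    have ha' : (A * D - B * C) * a' = 0 := by linear_combination A * h2 - C * h1
    rcases mul_eq_zero.mp ha with h | h
    · exact h
    rcases mul_eq_zero.mp ha' with h' | h'
    · exact h'
    exact absurd (by simp [h, h']) hne
  · intro hdet
    by_cases hCD : C = 0 ∧ D = 0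
    · by_cases hAB : A = 0 ∧ B = 0
      · exact ⟨1, 0, by simp, by simp [hAB.1], by simp [hCD.1]⟩
      · refine ⟨B, -A, ?_, by ring, by rw [hCD.1, hCD.2]; ring⟩
        simp only [Ne, Prod.mk.injEq, not_and_or, neg_eq_zero] at hAB ⊢
        tauto
    · refine ⟨D, -C, ?_, by linear_combination hdet, by ring⟩
      simp only [Ne, Prod.mk.injEq, not_and_or, neg_eq_zero] at hCD ⊢
      tauto

/-- For `x, y, T > 0`, `n ≥ 1` and `τ ∈ ℝ`, a nontrivial
`h t = a cosh (n t) + a' sinh (n t)` satisfies the boundary conditions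
`n h(0) - h'(0) = τ x h(0)` and `n h(T) + h'(T) = τ y h(T)` if and only if
`τ² xy sinh(nT) - nτ e^{nT}(x+y) + 2n² e^{nT} = 0`. -/
theorem stmt17 (x y T : ℝ) (hx : 0 < x) (hy : 0 < y) (hT : 0 < T)
    (n : ℕ) (hn : 1 ≤ n) (τ : ℝ) :
    (∃ a a' : ℝ, (a, a') ≠ (0, 0) ∧
      (n : ℝ) * ((fun t : ℝ => a * Real.cosh ((n : ℝ) * t) + a' * Real.sinh ((n : ℝ) * t)) 0)
        - deriv (fun t : ℝ => a * Real.cosh ((n : ℝ) * t) + a' * Real.sinh ((n : ℝ) * t)) 0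
        = τ * x * ((fun t : ℝ => a * Real.cosh ((n : ℝ) * t) + a' * Real.sinh ((n : ℝ) * t)) 0) ∧
      (n : ℝ) * ((fun t : ℝ => a * Real.cosh ((n : ℝ) * t) + a' * Real.sinh ((n : ℝ) * t)) T)
        + deriv (fun t : ℝ => a * Real.cosh ((n : ℝ) * t) + a' * Real.sinh ((n : ℝ) * t)) T
        = τ * y * ((fun t : ℝ => a * Real.cosh ((n : ℝ) * t) + a' * Real.sinh ((n : ℝ) * t)) T)) ↔
    τ ^ 2 * x * y * Real.sinh ((n : ℝ) * T)
      - (n : ℝ) * τ * Real.exp ((n : ℝ) * T) * (x + y)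
      + 2 * (n : ℝ) ^ 2 * Real.exp ((n : ℝ) * T) = 0 := by
  set N : ℝ := (n : ℝ) with hN
  have hd : ∀ a a' t : ℝ,
      deriv (fun t : ℝ => a * Real.cosh (N * t) + a' * Real.sinh (N * t)) t
        = a * (N * Real.sinh (N * t)) + a' * (N * Real.cosh (N * t)) := by
    intro a a' t
    have h1 : HasDerivAt (fun t : ℝ => N * t) N t := by
      simpa using (hasDerivAt_id t).const_mul N
    have h2 := (h1.cosh.const_mul a).add (h1.sinh.const_mul a')
    rw [show deriv (fun t : ℝ => a * Real.cosh (N * t) + a' * Real.sinh (N * t)) t = _ from h2.deriv]; ring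
  set c : ℝ := Real.cosh (N * T) with hc
  set s : ℝ := Real.sinh (N * T) with hs
  have he : c + s = Real.exp (N * T) := by
    rw [hc, hs]; exact Real.cosh_add_sinh _
  have key := det_iff_aux (N - τ * x) (-N)
      (N * c + N * s - τ * y * c) (N * c + N * s - τ * y * s)
  constructor
  · rintro ⟨a, a', hne, e1, e2⟩
    simp only [hd, Real.cosh_zero, Real.sinh_zero, mul_zero, mul_one] at e1 e2
    have hdet := key.mp ⟨a, a', hne, by linear_combination e1, by linear_combination e2⟩
    rw [← he]
    linear_combination hdet
  · intro htau
    rw [← he] at htau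
    obtain ⟨a, a', hne, e1, e2⟩ := key.mpr (by linear_combination htau)
    refine ⟨a, a', hne, ?_, ?_⟩
    · simp only [hd, Real.cosh_zero, Real.sinh_zero, mul_zero, mul_one]
      linear_combination e1
    · simp only [hd]
      linear_combination e2
end

section
/- Let x, y, T > 0 and let τ be real. There exists a pair (a, a') ≠ (0, 0) of real numbers such that the affine function h(t) = a + a'·t satisfies both -h'(0) = τ·x·h(0) and h'(T) = τ·y·h(T) if and only if τ = 0 or τ = (x + y)/(T·x·y). -/
/-!
The boundary conditions are a homogeneous linear system in `(a, a')` with matrix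
`[[τx, 1], [τy, τyT - 1]]`, whose determinant factors as `τ (τTxy - (x + y))`; a nontrivial
solution exists exactly when it vanishes.
-/

theorem deriv_const_add_mul {𝕜 : Type*} [NontriviallyNormedField 𝕜] (a b s : 𝕜) :
    deriv (fun t => a + b * t) s = b := by
  simp

theorem exists_ne_zero_linear_system_fin_two_iff {R : Type*} [CommRing R] [IsDomain R]
    (p q r s : R) :
    (∃ a b : R, (a, b) ≠ (0, 0) ∧ p * a + q * b = 0 ∧ r * a + s * b = 0) ↔
      p * s - q * r = 0 := by
  rw [← Matrix.det_fin_two_of, ← Matrix.exists_mulVec_eq_zero_iff]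
  simp [Fin.exists_fin_succ_pi, funext_iff, Fin.forall_fin_two, Prod.ext_iff]

theorem mul_sub_eq_zero_iff_eq_zero_or_eq_div {K : Type*} [Field K] {τ c d : K} (hd : d ≠ 0) :
    τ * (τ * d - c) = 0 ↔ τ = 0 ∨ τ = c / d := by
  rw [mul_eq_zero, sub_eq_zero, eq_div_iff hd]

/-- For `x, y, T > 0` and `τ ∈ ℝ`, a nontrivial affine `h t = a + a' t`
satisfies `-h'(0) = τ x h(0)` and `h'(T) = τ y h(T)` if and only if
`τ = 0` or `τ = (x + y) / (T x y)`. -/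
theorem stmt18 (x y T : ℝ) (hx : 0 < x) (hy : 0 < y) (hT : 0 < T) (τ : ℝ) :
    (∃ a a' : ℝ, (a, a') ≠ (0, 0) ∧
      -(deriv (fun t : ℝ => a + a' * t) 0) = τ * x * ((fun t : ℝ => a + a' * t) 0) ∧
      deriv (fun t : ℝ => a + a' * t) T = τ * y * ((fun t : ℝ => a + a' * t) T)) ↔
    (τ = 0 ∨ τ = (x + y) / (T * x * y)) := by
  simp only [deriv_const_add_mul, mul_zero, add_zero]
  calc (∃ a a' : ℝ, (a, a') ≠ (0, 0) ∧ -a' = τ * x * a ∧ a' = τ * y * (a + a' * T))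
      ↔ ∃ a a' : ℝ, (a, a') ≠ (0, 0) ∧
          τ * x * a + 1 * a' = 0 ∧ τ * y * a + (τ * y * T - 1) * a' = 0 := by
        refine exists₂_congr fun a a' => and_congr_right' (and_congr ?_ ?_) <;>
          constructor <;> intro h <;> linear_combination -h
    _ ↔ τ * (τ * (T * x * y) - (x + y)) = 0 := by
        rw [exists_ne_zero_linear_system_fin_two_iff]
        constructor <;> intro h <;> linear_combination h
    _ ↔ τ = 0 ∨ τ = (x + y) / (T * x * y) :=
        mul_sub_eq_zero_iff_eq_zero_or_eq_div (by positivity)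
end
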